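/- arXiv:2202.01369 — 4 statements merged into one kernel-verified Lean document; each statement's English description precedes it below -/
import Mathlib

section
/- Let q = 2^r with r ≥ 1 (an even prime power) and set v = 1 + q + q² + q³. Then there exists a v×v (0,1)-matrix that is the adjacency matrix of a strongly regular graph with parameters SRG(v, q³, q³ − q², q³ − q²). -/
open Matrix

/-- The all-ones matrix. -/
def allOnes (ι : Type*) : Matrix ι ι ℤ := Matrix.of fun _ _ => 1

/-- `A` is the adjacency matrix of a strongly regular graph with parameters `(v, k, l, mu)`. -/
def IsSRGAdj {ι : Type*} [Fintype ι] [DecidableEq ι]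
    (A : Matrix ι ι ℤ) (k l mu : ℤ) : Prop :=
  A.IsSymm ∧ (∀ i, A i i = 0) ∧ (∀ i j, A i j = 0 ∨ A i j = 1) ∧
    A * A = k • (1 : Matrix ι ι ℤ) + l • A + mu • (allOnes ι - 1 - A)

/-!
Take the points of `ℙ(K⁴)` over `K = GF(q)` and call two points adjacent when they are not
orthogonal for the standard symplectic form `B`; as `B` is alternating, this is a loopless
symmetric relation. For linearly independent `x₁, …, xₘ`, nondegeneracy makes
`z ↦ (B xᵢ z)ᵢ` a surjective linear map onto `Kᵐ`, so all its fibres have the same size and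
exactly `(q - 1)ᵐ q⁴⁻ᵐ` vectors `z` have `B xᵢ z ≠ 0` for every `i`. Dividing by the `q - 1`
nonzero scalars, every point has `q³` neighbours (`m = 1`) and any two distinct points, adjacent
or not, have `(q - 1) q² = q³ - q²` common neighbours (`m = 2`).
-/

open Finset
open scoped LinearAlgebra.Projectivization

theorem IsSRGAdj.reindex {ι κ : Type*} [Fintype ι] [DecidableEq ι] [Fintype κ] [DecidableEq κ]
    (e : ι ≃ κ) {A : Matrix ι ι ℤ} {k l mu : ℤ} (h : IsSRGAdj A k l mu) :
    IsSRGAdj (reindex e e A) k l mu := by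
  obtain ⟨hsymm, hdiag, hbool, hsq⟩ := h
  refine ⟨hsymm.submatrix _, fun i => hdiag _, fun i j => hbool _ _, ?_⟩
  rw [reindex_apply, submatrix_mul_equiv, hsq]
  ext i j
  simp only [submatrix_apply, Matrix.add_apply, Matrix.smul_apply, Matrix.sub_apply, one_apply,
    allOnes, of_apply, EmbeddingLike.apply_eq_iff_eq]

theorem SimpleGraph.IsSRGWith.isSRGAdj {V : Type*} [Fintype V] [DecidableEq V]
    {G : SimpleGraph V} [DecidableRel G.Adj] {n k ℓ μ : ℕ} (h : G.IsSRGWith n k ℓ μ) :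
    IsSRGAdj (G.adjMatrix ℤ) k ℓ μ := by
  refine ⟨G.isSymm_adjMatrix, fun i => by simp,
    fun i j => by by_cases G.Adj i j <;> simp [*], ?_⟩
  have hcompl : Gᶜ.adjMatrix ℤ = allOnes V - 1 - G.adjMatrix ℤ := by
    change _ = of 1 - 1 - _
    rw [← G.compl_adjMatrix_eq_adjMatrix_compl ℤ,
      ← G.one_add_adjMatrix_add_compl_adjMatrix_eq_of_one ℤ]
    abel
  rw [← sq, h.matrix_eq, hcompl]
  simp only [natCast_zsmul]

theorem AddMonoidHom.card_filter_mul_card_of_surjective {V W : Type*} [AddGroup V] [AddGroup W]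
    [Fintype V] [Fintype W] [DecidableEq W] (L : V →+ W) (hL : Function.Surjective L)
    (P : W → Prop) [DecidablePred P] :
    #{z | P (L z)} * Fintype.card W = #{w | P w} * Fintype.card V := by
  have hpre (t : Finset W) : #{z | L z ∈ t} = #t * #{z | L z = 0} := by
    rw [← sum_card_fiberwise_eq_card_filter]
    exact sum_const_nat fun w _ => card_fiber_eq_of_mem_range L (hL w) (hL 0)
  have hP := hpre {w | P w}
  have hV := hpre univ
  simp only [mem_filter, mem_univ, true_and, filter_true, card_univ] at hP hV
  rw [hP, hV]
  ring

theorem Projectivization.card_filter_rep_mul {K V : Type*} [Field K] [AddCommGroup V]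
    [Module K V] [Fintype K] [Fintype V] [Fintype (ℙ K V)] (Q : V → Prop) [DecidablePred Q]
    (h0 : ¬Q 0) (hsmul : ∀ (c : Kˣ) z, Q (c • z) ↔ Q z) :
    #{p : ℙ K V | Q p.rep} * (Fintype.card K - 1) = #{z : V | Q z} := by
  classical
  have hinj : Function.Injective fun pc : ℙ K V × Kˣ => pc.2 • pc.1.rep := by
    rintro ⟨p, c⟩ ⟨p', c'⟩ h
    dsimp only at h
    have hp : p = p' := by
      rw [← mk_rep p, ← mk_rep p', mk_eq_mk_iff]
      exact ⟨c⁻¹ * c', by rw [mul_smul, ← h, inv_smul_smul]⟩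
    subst hp
    exact Prod.ext rfl (Units.ext (smul_left_injective K p.rep_nonzero h))
  have himage : (({p | Q p.rep} : Finset (ℙ K V)) ×ˢ (univ : Finset Kˣ)).image
      (fun pc => pc.2 • pc.1.rep) = ({z | Q z} : Finset V) := by
    ext z
    simp only [mem_image, mem_product, mem_filter, mem_univ, true_and, and_true, Prod.exists]
    constructor
    · rintro ⟨p, c, hp, rfl⟩
      exact (hsmul c _).mpr hp
    · intro hz
      have hz0 : z ≠ 0 := by rintro rfl; exact h0 hz
      obtain ⟨a, ha⟩ := exists_smul_eq_mk_rep K z hz0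
      exact ⟨mk K z hz0, a⁻¹, by rwa [← ha, hsmul], by rw [← ha, inv_smul_smul]⟩
  rw [← himage, card_image_of_injective _ hinj, card_product, card_univ, Fintype.card_units]

namespace LinearMap.BilinForm

variable {K V : Type*} [Field K] [AddCommGroup V] [Module K V] {B : LinearMap.BilinForm K V}

theorem surjective_pi_of_linearIndependent {ι : Type*} [Finite ι] (hB : B.SeparatingLeft)
    {v : ι → V} (hv : LinearIndependent K v) :
    Function.Surjective (LinearMap.pi fun i => B (v i)) := by
  have hBv : LinearIndependent K fun i => ⇑(B (v i)) :=
    (hv.map' B (LinearMap.separatingLeft_iff_ker_eq_bot.mp hB)).map'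
      (LinearMap.ltoFun K V K K) (LinearMap.ker_eq_bot.mpr DFunLike.coe_injective)
  rw [← LinearMap.range_eq_top, ← span_flip_eq_top_iff_linearIndependent.mpr hBv,
    ← Submodule.span_eq (LinearMap.range _), LinearMap.coe_range]
  rfl

variable (B) in
def nonorthogonalityGraph : SimpleGraph (ℙ K V) :=
  SimpleGraph.fromRel fun p p' => B p.rep p'.rep ≠ 0

theorem IsAlt.nonorthogonalityGraph_adj (hB : B.IsAlt) {p p' : ℙ K V} :
    (nonorthogonalityGraph B).Adj p p' ↔ B p.rep p'.rep ≠ 0 := by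
  rw [nonorthogonalityGraph, SimpleGraph.fromRel_adj, ← hB.isRefl.eq_iff.ne, or_self,
    and_iff_right_iff_imp]
  rintro h rfl
  exact h (hB.self_eq_zero _)

section Finite

variable [Fintype K] [DecidableEq K] [Fintype V]

theorem card_filter_forall_ne_zero_mul {ι : Type*} [Fintype ι] (hB : B.SeparatingLeft)
    {v : ι → V} (hv : LinearIndependent K v) :
    #{z | ∀ i, B (v i) z ≠ 0} * Fintype.card K ^ Fintype.card ι
      = (Fintype.card K - 1) ^ Fintype.card ι * Fintype.card V := by
  classical
  have h := (LinearMap.pi fun i => B (v i)).toAddMonoidHom.card_filter_mul_card_of_surjective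
    (surjective_pi_of_linearIndependent hB hv) fun w => ∀ i, w i ≠ 0
  have hunits : #{w : ι → K | ∀ i, w i ≠ 0} = (Fintype.card K - 1) ^ Fintype.card ι := by
    rw [← Fintype.card_subtype,
      Fintype.card_congr (Equiv.subtypePiEquivPi (p := fun _ a => a ≠ 0)), Fintype.card_pi]
    simp
  rwa [hunits, Fintype.card_fun] at h

variable [Fintype (ℙ K V)]

theorem card_filter_forall_rep_ne_zero_mul {ι : Type*} [Fintype ι] [Nonempty ι]
    (hB : B.SeparatingLeft) {f : ι → ℙ K V} (hf : Projectivization.Independent f) :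
    #{p : ℙ K V | ∀ i, B (f i).rep p.rep ≠ 0} * (Fintype.card K - 1) *
        Fintype.card K ^ Fintype.card ι
      = (Fintype.card K - 1) ^ Fintype.card ι * Fintype.card V := by
  rw [Projectivization.card_filter_rep_mul fun z => ∀ i, B (f i).rep z ≠ 0]
  · exact card_filter_forall_ne_zero_mul hB (Projectivization.independent_iff.mp hf)
  · simp
  · intro c z
    simp [Units.smul_def]

variable [DecidableRel (nonorthogonalityGraph B).Adj] {d : ℕ}

theorem IsAlt.degree_nonorthogonalityGraph (hB : B.IsAlt) (hnd : B.SeparatingLeft)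
    (hV : Module.finrank K V = d + 2) (p : ℙ K V) :
    (nonorthogonalityGraph B).degree p = Fintype.card K ^ (d + 1) := by
  have hcount := card_filter_forall_rep_ne_zero_mul hnd (f := fun _ : Unit => p)
    (Projectivization.independent_iff.mpr (linearIndependent_unique_iff.mpr p.rep_nonzero))
  simp only [forall_const, Fintype.card_unit, pow_one] at hcount
  rw [Module.card_eq_pow_finrank (K := K) (V := V), hV] at hcount
  have hq : 0 < (Fintype.card K - 1) * Fintype.card K := by
    have := Fintype.one_lt_card (α := K)
    exact Nat.mul_pos (by omega) (by omega)
  rw [← SimpleGraph.card_neighborFinset_eq_degree, SimpleGraph.neighborFinset_eq_filter]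
  simp_rw [hB.nonorthogonalityGraph_adj]
  refine Nat.eq_of_mul_eq_mul_right hq ?_
  rw [← mul_assoc, hcount]
  ring

theorem IsAlt.card_commonNeighbors_nonorthogonalityGraph (hB : B.IsAlt) (hnd : B.SeparatingLeft)
    (hV : Module.finrank K V = d + 2) {p p' : ℙ K V} (hne : p ≠ p') :
    Fintype.card ((nonorthogonalityGraph B).commonNeighbors p p')
      = (Fintype.card K - 1) * Fintype.card K ^ d := by
  have hcount := card_filter_forall_rep_ne_zero_mul hnd
    ((Projectivization.independent_pair_iff_ne p p').mpr hne)
  simp only [Fin.forall_fin_two, Matrix.cons_val_zero, Matrix.cons_val_one, Fintype.card_fin]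
    at hcount
  rw [Module.card_eq_pow_finrank (K := K) (V := V), hV] at hcount
  have hcommon : ((nonorthogonalityGraph B).commonNeighbors p p').toFinset
      = ({z | B p.rep z.rep ≠ 0 ∧ B p'.rep z.rep ≠ 0} : Finset (ℙ K V)) := by
    ext z
    simp [SimpleGraph.mem_commonNeighbors, hB.nonorthogonalityGraph_adj]
  have hq : 0 < (Fintype.card K - 1) * Fintype.card K ^ 2 := by
    have := Fintype.one_lt_card (α := K)
    exact Nat.mul_pos (by omega) (by positivity)
  rw [← Set.toFinset_card, hcommon]
  refine Nat.eq_of_mul_eq_mul_right hq ?_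
  rw [← mul_assoc, hcount]
  ring

theorem IsAlt.isSRGWith_nonorthogonalityGraph (hB : B.IsAlt) (hnd : B.SeparatingLeft)
    (hV : Module.finrank K V = d + 2) :
    (nonorthogonalityGraph B).IsSRGWith (∑ i ∈ Finset.range (d + 2), Fintype.card K ^ i)
      (Fintype.card K ^ (d + 1)) ((Fintype.card K - 1) * Fintype.card K ^ d)
      ((Fintype.card K - 1) * Fintype.card K ^ d) where
  card := by
    rw [← Nat.card_eq_fintype_card, Projectivization.card_of_finrank K V hV,
      Nat.card_eq_fintype_card]
  regular := hB.degree_nonorthogonalityGraph hnd hV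
  of_adj _ _ h := hB.card_commonNeighbors_nonorthogonalityGraph hnd hV h.ne
  of_not_adj _ _ hne _ := hB.card_commonNeighbors_nonorthogonalityGraph hnd hV hne

end Finite

end LinearMap.BilinForm

section Symplectic

variable (l K : Type*) [Fintype l] [DecidableEq l] [CommRing K]

noncomputable def symplecticForm : LinearMap.BilinForm K (l ⊕ l → K) :=
  Matrix.toLinearMap₂' K (J l K)

variable {l K}

theorem symplecticForm_isAlt : (symplecticForm l K).IsAlt := by
  intro x
  simp [symplecticForm, Matrix.toLinearMap₂'_apply', J, fromBlocks_mulVec, neg_mulVec, one_mulVec,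
    dotProduct, Fintype.sum_sum_type, mul_comm]

theorem symplecticForm_nondegenerate [IsDomain K] : (symplecticForm l K).Nondegenerate :=
  (Matrix.nondegenerate_of_det_ne_zero (isUnit_det_J l K).ne_zero).toLinearMap₂'

end Symplectic

theorem stmt4 (r q : ℕ) (hr : 1 ≤ r) (hq : q = 2 ^ r) :
    ∃ A : Matrix (Fin (1 + q + q ^ 2 + q ^ 3)) (Fin (1 + q + q ^ 2 + q ^ 3)) ℤ,
      IsSRGAdj A ((q : ℤ) ^ 3) ((q : ℤ) ^ 3 - (q : ℤ) ^ 2) ((q : ℤ) ^ 3 - (q : ℤ) ^ 2) := by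
  classical
  let K := GaloisField 2 r
  let _ : Fintype K := Fintype.ofFinite K
  let _ : Fintype (ℙ K (Fin 2 ⊕ Fin 2 → K)) := Fintype.ofFinite _
  have hK : Fintype.card K = q := by
    rw [Fintype.card_eq_nat_card, GaloisField.card 2 r (by omega), hq]
  have hG := (symplecticForm_isAlt (l := Fin 2) (K := K)).isSRGWith_nonorthogonalityGraph
    symplecticForm_nondegenerate.1 (d := 2) (by simp)
  rw [hK] at hG
  obtain ⟨e⟩ : Nonempty (ℙ K (Fin 2 ⊕ Fin 2 → K) ≃ Fin (1 + q + q ^ 2 + q ^ 3)) := by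
    rw [← Fintype.card_eq, hG.card, Fintype.card_fin]
    simp [Finset.sum_range_succ]
  have hk : ((q ^ (2 + 1) : ℕ) : ℤ) = (q : ℤ) ^ 3 := by push_cast; ring
  have hl : (((q - 1) * q ^ 2 : ℕ) : ℤ) = (q : ℤ) ^ 3 - (q : ℤ) ^ 2 := by
    push_cast [Nat.cast_sub (hq ▸ Nat.one_le_two_pow : 1 ≤ q)]
    ring
  have hA := hG.isSRGAdj.reindex e
  rw [hk, hl] at hA
  exact ⟨_, hA⟩
end

section
/- Let m, n, k, λ be positive integers with 2n ∣ m. Suppose there exist (i) a BGW(m,m,m) over the cyclic group ℤ/2nℤ, encoded as a function c : {1,…,m}×{1,…,m} → ℤ/2nℤ such that for all distinct i, j and every g ∈ ℤ/2nℤ, the number of indices ℓ with c(i,ℓ) − c(j,ℓ) = g equals m/(2n); and (ii) a BGW(n,k,λ) over {1,−1}. Then there exists an (mn)×(mn) integer matrix W, with rows and columns indexed by {1,…,m}×{1,…,n}, whose entries lie in {−1,0,1}, such that W·Wᵀ = mk·I, |W|·|W|ᵀ = |W|ᵀ·|W| = mk·I + mλ·(𝒥_{m,n} − I) + (m/n)k²·(J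 − 𝒥_{m,n}) (so |W| is the incidence matrix of an SGDD(mn, mk, m, n, mλ, (m/n)k²)), and |W|·𝒥_{m,n} = 𝒥_{m,n}·|W| = k·J. -/
/-!
Write `P_s g = twistedShift s g`. The matrices `P_{-1} g` are the negacyclic shifts, signed
permutation matrices with `P_{-1} g * (P_{-1} h)ᵀ = P_{-1} (g - h)` and `P_{-1} n = -1`, so
`∑ g, P_{-1} g = 0`; their absolute values `P_1 g` are the cyclic shifts by `g mod n`, with
`∑ g, P_1 g = 2 • J`. The blocks of `W` are `P_{-1} (c i ℓ) * C`, so block `(i, j)` of `W * Wᵀ` is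
`k • ∑ ℓ, P_{-1} (c i ℓ - c j ℓ)`, which the balance of `c` kills for `i ≠ j`; the same computation
with `|C| * |C|ᵀ = (k - λ) • 1 + λ • J` gives `|W| * |W|ᵀ`. Every block of `|W|` has all line sums
`k`, so `|W|` commutes with `𝒥`, with `J` and hence with `|W| * |W|ᵀ`. A real matrix commuting with
`A * Aᵀ` is normal, as then `tr ((Aᵀ A - A Aᵀ)²) = 0`; so `|W|ᵀ * |W| = |W| * |W|ᵀ` follows without
any information on the columns of `c`.
-/

open Matrix

/-- The matrix `𝒥_{m,n} = I_m ⊗ J_n`, with rows and columns indexed by pairs: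
entry `((i,a),(j,b))` is `1` iff `i = j`. -/
def blockJ (m n : ℕ) : Matrix (Fin m × Fin n) (Fin m × Fin n) ℤ :=
  Matrix.of fun x y => if x.1 = y.1 then 1 else 0

open Finset

namespace Matrix

variable {ι R : Type*} [Fintype ι] [CommRing R] [PartialOrder R] [StarRing R] [StarOrderedRing R]
  [NoZeroDivisors R]

theorem conjTranspose_mul_self_eq_of_commute {A : Matrix ι ι R} (h : Commute A (A * Aᴴ)) :
    Aᴴ * A = A * Aᴴ := by
  have hPP : (Aᴴ * A * (Aᴴ * A)).trace = (A * Aᴴ * (A * Aᴴ)).trace := by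
    rw [Matrix.mul_assoc, trace_mul_comm]; simp only [Matrix.mul_assoc]
  have hPS : (Aᴴ * A * (A * Aᴴ)).trace = (A * Aᴴ * (A * Aᴴ)).trace := by
    rw [Matrix.mul_assoc, h.eq, trace_mul_comm]; simp only [Matrix.mul_assoc]
  have hD : (Aᴴ * A - A * Aᴴ)ᴴ * (Aᴴ * A - A * Aᴴ) =
      Aᴴ * A * (Aᴴ * A) - Aᴴ * A * (A * Aᴴ) - (A * Aᴴ * (Aᴴ * A) - A * Aᴴ * (A * Aᴴ)) := by
    simp only [conjTranspose_sub, conjTranspose_mul, conjTranspose_conjTranspose]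
    noncomm_ring
  have hD0 : ((Aᴴ * A - A * Aᴴ)ᴴ * (Aᴴ * A - A * Aᴴ)).trace = 0 := by
    rw [hD, trace_sub, trace_sub, trace_sub, trace_mul_comm (A * Aᴴ), hPP, hPS]
    abel
  exact sub_eq_zero.mp (trace_conjTranspose_mul_self_eq_zero_iff.mp hD0)

theorem transpose_mul_self_eq_of_commute [TrivialStar R] {A : Matrix ι ι R}
    (h : Commute A (A * Aᵀ)) : Aᵀ * A = A * Aᵀ := by
  simpa only [conjTranspose_eq_transpose_of_trivial] using
    conjTranspose_mul_self_eq_of_commute (A := A) (by rwa [conjTranspose_eq_transpose_of_trivial])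

end Matrix

lemma sum_comp_eq_nsmul_sum {ι G M : Type*} [Fintype ι] [Fintype G] [DecidableEq G]
    [AddCommMonoid M] {d : ι → G} {q : ℕ} (hd : ∀ g, #{ℓ | d ℓ = g} = q) (F : G → M) :
    ∑ ℓ, F (d ℓ) = q • ∑ g, F g := by
  rw [← sum_fiberwise univ d (fun ℓ => F (d ℓ)), smul_sum]
  refine sum_congr rfl fun g _ => ?_
  rw [sum_congr rfl fun ℓ hℓ => by rw [(mem_filter.mp hℓ).2], sum_const, hd]

lemma allOnes_transpose (ι : Type*) : (allOnes ι)ᵀ = allOnes ι := rfl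

section ZModTwoMul

variable {n : ℕ}

def finToZMod (a : Fin n) : ZMod (2 * n) := (a : ℕ)

lemma natCast_add_natCast_self : (n : ZMod (2 * n)) + n = 0 := by
  rw [← two_mul]; exact_mod_cast ZMod.natCast_self (2 * n)

lemma finToZMod_inj {a b : Fin n} : finToZMod a = finToZMod b ↔ a = b := by
  rw [finToZMod, finToZMod, ZMod.natCast_eq_natCast_iff', Nat.mod_eq_of_lt (by omega),
    Nat.mod_eq_of_lt (by omega), Fin.val_inj]

lemma finToZMod_ne_add (a b : Fin n) : finToZMod a ≠ finToZMod b + n := by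
  rw [finToZMod, finToZMod, ← Nat.cast_add, Ne, ZMod.natCast_eq_natCast_iff',
    Nat.mod_eq_of_lt (by omega), Nat.mod_eq_of_lt (by omega)]
  omega

variable [NeZero n]

lemma exists_eq_finToZMod (w : ZMod (2 * n)) :
    ∃ b : Fin n, w = finToZMod b ∨ w = finToZMod b + n := by
  have hw : w.val < 2 * n := ZMod.val_lt w
  rcases lt_or_ge w.val n with h | h
  · exact ⟨⟨w.val, h⟩, Or.inl (ZMod.natCast_zmod_val w).symm⟩
  · refine ⟨⟨w.val - n, by omega⟩, Or.inr ?_⟩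
    rw [finToZMod, ← Nat.cast_add, Nat.sub_add_cancel h, ZMod.natCast_zmod_val]

lemma sum_eq_sum_finToZMod {M : Type*} [AddCommMonoid M] (F : ZMod (2 * n) → M) :
    ∑ z, F z = ∑ b : Fin n, (F (finToZMod b) + F (finToZMod b + n)) := by
  have hbij : Function.Bijective fun i : Fin (2 * n) => ((i : ℕ) : ZMod (2 * n)) := by
    rw [Fintype.bijective_iff_injective_and_card, ZMod.card, Fintype.card_fin]
    refine ⟨fun a b h => Fin.ext ?_, rfl⟩
    simpa [ZMod.val_cast_of_lt a.isLt, ZMod.val_cast_of_lt b.isLt] using congrArg ZMod.val h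
  rw [← hbij.sum_comp, Fin.sum_univ_eq_sum_range (fun i => F i),
    show range (2 * n) = range (n + n) by rw [two_mul], sum_range_add,
    ← Fin.sum_univ_eq_sum_range (fun i => F i), ← Fin.sum_univ_eq_sum_range, ← sum_add_distrib]
  simp only [finToZMod, Nat.cast_add, add_comm]

end ZModTwoMul

section TwistedShift

variable {n : ℕ} (s : ℤ)

def twistedDelta (d : ZMod (2 * n)) : ℤ := (if d = 0 then 1 else 0) + s * if d = n then 1 else 0

/-- Row `a` of `twistedShift s g` is the vector standing for `a - g ∈ ZMod (2n)`, where
`b : Fin n` stands for `e_b` and `b + n` for `s • e_b`. -/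
def twistedShift (g : ZMod (2 * n)) : Matrix (Fin n) (Fin n) ℤ :=
  .of fun a b => twistedDelta s (finToZMod a - g - finToZMod b)

variable {s}

lemma twistedDelta_neg (d : ZMod (2 * n)) : twistedDelta s (-d) = twistedDelta s d := by
  have hn : -(n : ZMod (2 * n)) = n := neg_eq_of_add_eq_zero_left natCast_add_natCast_self
  simp only [twistedDelta, neg_eq_iff_eq_neg, neg_zero, hn]

lemma twistedDelta_sub_natCast (hs : s * s = 1) (d : ZMod (2 * n)) :
    twistedDelta s (d - (n : ZMod (2 * n))) = s * twistedDelta s d := by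
  have hn : d - n = n ↔ d = 0 := by
    rw [sub_eq_iff_eq_add, natCast_add_natCast_self]
  simp only [twistedDelta, sub_eq_zero, hn]
  linear_combination (-(if d = n then (1 : ℤ) else 0)) * hs

lemma twistedDelta_finToZMod_sub (a b : Fin n) :
    twistedDelta s (finToZMod a - finToZMod b) = if a = b then 1 else 0 := by
  have hn : finToZMod a - finToZMod b ≠ n := by
    rw [Ne, sub_eq_iff_eq_add']; exact finToZMod_ne_add a b
  simp [twistedDelta, hn, sub_eq_zero, finToZMod_inj]

lemma twistedDelta_finToZMod_add_sub (a b : Fin n) :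
    twistedDelta s (finToZMod a + (n : ZMod (2 * n)) - finToZMod b) = if a = b then s else 0 := by
  have hn : finToZMod a + n - finToZMod b ≠ 0 := sub_ne_zero.mpr (finToZMod_ne_add b a).symm
  rw [twistedDelta, if_neg hn, add_sub_right_comm]
  simp [sub_eq_zero, finToZMod_inj]

lemma twistedShift_apply (g : ZMod (2 * n)) (a b : Fin n) :
    twistedShift s g a b = twistedDelta s (finToZMod a - g - finToZMod b) := rfl

lemma twistedShift_zero : twistedShift s 0 = (1 : Matrix (Fin n) (Fin n) ℤ) := by
  ext a b
  rw [twistedShift_apply, sub_zero, twistedDelta_finToZMod_sub, Matrix.one_apply]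

lemma twistedShift_mul_apply_of_eq {κ : Type*} {g : ZMod (2 * n)} {a b : Fin n}
    (h : finToZMod a - g = finToZMod b) (M : Matrix (Fin n) κ ℤ) (x : κ) :
    (twistedShift s g * M) a x = M b x := by
  simp [Matrix.mul_apply, twistedShift_apply, h, twistedDelta_finToZMod_sub]

lemma twistedShift_mul_apply_of_eq_add {κ : Type*} {g : ZMod (2 * n)} {a b : Fin n}
    (h : finToZMod a - g = finToZMod b + n) (M : Matrix (Fin n) κ ℤ) (x : κ) :
    (twistedShift s g * M) a x = s * M b x := by
  simp [Matrix.mul_apply, twistedShift_apply, h, twistedDelta_finToZMod_add_sub, ite_mul]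

variable [NeZero n]

lemma sum_twistedDelta_mul {G : ZMod (2 * n) → ℤ} (hG : ∀ z, G (z + n) = s * G z)
    (w : ZMod (2 * n)) :
    ∑ b : Fin n, twistedDelta s (w - finToZMod b) * G (finToZMod b) = G w := by
  calc ∑ b : Fin n, twistedDelta s (w - finToZMod b) * G (finToZMod b)
      = ∑ b : Fin n, ((if w = finToZMod b then G (finToZMod b) else 0) +
          if w = finToZMod b + n then G (finToZMod b + n) else 0) := by
        refine sum_congr rfl fun b _ => ?_
        simp only [twistedDelta, sub_eq_iff_eq_add', add_zero, hG]
        split_ifs <;> ring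
    _ = ∑ z, if w = z then G z else 0 :=
        (sum_eq_sum_finToZMod fun z => if w = z then G z else 0).symm
    _ = G w := by simp

variable (s) in
lemma sum_twistedShift : ∑ g, twistedShift s g = (1 + s) • allOnes (Fin n) := by
  ext a b
  simp only [Matrix.sum_apply, twistedShift_apply, Matrix.smul_apply, allOnes, Matrix.of_apply,
    smul_eq_mul, mul_one, sub_right_comm _ _ (finToZMod b)]
  rw [Fintype.sum_equiv (Equiv.subLeft (finToZMod a - finToZMod b))
    (fun g => twistedDelta s (finToZMod a - finToZMod b - g)) (twistedDelta s) fun _ => rfl]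
  simp [twistedDelta, sum_add_distrib]

lemma twistedShift_mul_transpose (hs : s * s = 1) (g h : ZMod (2 * n)) :
    twistedShift s g * (twistedShift s h)ᵀ = twistedShift s (g - h) := by
  ext a b
  simp only [Matrix.mul_apply, Matrix.transpose_apply, twistedShift_apply]
  -- `z ↦ twistedDelta s (b - h - z)` is `s`-antiperiodic, so the sum collapses to `z = a - g`.
  rw [sum_twistedDelta_mul (G := fun z => twistedDelta s (finToZMod b - h - z))
    (fun z => by rw [sub_add_eq_sub_sub, twistedDelta_sub_natCast hs]), ← twistedDelta_neg]
  congr 1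
  ring

lemma transpose_twistedShift (hs : s * s = 1) (g : ZMod (2 * n)) :
    (twistedShift s g)ᵀ = twistedShift s (-g) := by
  rw [← Matrix.one_mul (twistedShift s g)ᵀ, ← twistedShift_zero (s := s),
    twistedShift_mul_transpose hs, zero_sub]

lemma twistedShift_one_mul_allOnes (g : ZMod (2 * n)) :
    twistedShift 1 g * allOnes (Fin n) = allOnes (Fin n) := by
  ext a x
  obtain ⟨b, h | h⟩ := exists_eq_finToZMod (finToZMod a - g)
  · exact twistedShift_mul_apply_of_eq h _ x
  · rw [twistedShift_mul_apply_of_eq_add h, one_mul]; rfl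

lemma allOnes_mul_twistedShift_one (g : ZMod (2 * n)) :
    allOnes (Fin n) * twistedShift 1 g = allOnes (Fin n) := by
  rw [← Matrix.transpose_transpose (twistedShift 1 g), transpose_twistedShift (by norm_num),
    ← allOnes_transpose, ← Matrix.transpose_mul, twistedShift_one_mul_allOnes]

lemma twistedShift_one_mul_mul_allOnes {X : Matrix (Fin n) (Fin n) ℤ} {r : ℤ}
    (hX : X * allOnes (Fin n) = r • allOnes (Fin n)) (g : ZMod (2 * n)) :
    twistedShift 1 g * X * allOnes (Fin n) = r • allOnes (Fin n) := by
  rw [Matrix.mul_assoc, hX, Matrix.mul_smul, twistedShift_one_mul_allOnes]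

lemma allOnes_mul_twistedShift_one_mul {X : Matrix (Fin n) (Fin n) ℤ} {r : ℤ}
    (hX : allOnes (Fin n) * X = r • allOnes (Fin n)) (g : ZMod (2 * n)) :
    allOnes (Fin n) * (twistedShift 1 g * X) = r • allOnes (Fin n) := by
  rw [← Matrix.mul_assoc, allOnes_mul_twistedShift_one, hX]

lemma commute_twistedShift_one_allOnes (g : ZMod (2 * n)) :
    Commute (twistedShift 1 g) (allOnes (Fin n)) :=
  (twistedShift_one_mul_allOnes g).trans (allOnes_mul_twistedShift_one g).symm

lemma twistedShift_neg_one_mul_map_abs (g : ZMod (2 * n)) (M : Matrix (Fin n) (Fin n) ℤ) :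
    (twistedShift (-1) g * M).map abs = twistedShift 1 g * M.map abs := by
  ext a x
  obtain ⟨b, h | h⟩ := exists_eq_finToZMod (finToZMod a - g)
  · simp [twistedShift_mul_apply_of_eq h]
  · simp [twistedShift_mul_apply_of_eq_add h]

end TwistedShift

section Blocks

variable {ι κ R : Type*} [Fintype ι] [Fintype κ] [CommRing R]

lemma comp_mul_comp (B B' : Matrix ι ι (Matrix κ κ R)) :
    comp ι ι κ κ R B * comp ι ι κ κ R B' = comp ι ι κ κ R (B * B') := by
  simpa using ((compRingEquiv ι κ R).map_mul B B').symm

lemma comp_mul_transpose_comp (B : Matrix ι ι (Matrix κ κ R)) :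
    comp ι ι κ κ R B * (comp ι ι κ κ R B)ᵀ =
      comp ι ι κ κ R (.of fun i j => ∑ ℓ, B i ℓ * (B j ℓ)ᵀ) := by
  rw [transpose_comp, comp_mul_comp]
  rfl

end Blocks

section ConstantBlockSums

variable {m n : ℕ} {B : Matrix (Fin m) (Fin m) (Matrix (Fin n) (Fin n) ℤ)} {r : ℤ}

lemma blockJ_eq_comp : blockJ m n = comp _ _ _ _ ℤ (diagonal fun _ => allOnes (Fin n)) := by
  ext ⟨i, a⟩ ⟨j, b⟩
  by_cases h : i = j <;> simp [blockJ, allOnes, h]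

lemma comp_mul_blockJ (hB : ∀ i j, B i j * allOnes (Fin n) = r • allOnes (Fin n)) :
    comp _ _ _ _ ℤ B * blockJ m n = r • allOnes (Fin m × Fin n) := by
  rw [blockJ_eq_comp, comp_mul_comp]
  ext ⟨i, a⟩ ⟨j, b⟩
  simp only [comp_apply, mul_diagonal, hB]
  rfl

lemma blockJ_mul_comp (hB : ∀ i j, allOnes (Fin n) * B i j = r • allOnes (Fin n)) :
    blockJ m n * comp _ _ _ _ ℤ B = r • allOnes (Fin m × Fin n) := by
  rw [blockJ_eq_comp, comp_mul_comp]
  ext ⟨i, a⟩ ⟨j, b⟩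
  simp only [comp_apply, diagonal_mul, hB]
  rfl

lemma commute_comp_allOnes (hB₁ : ∀ i j, B i j * allOnes (Fin n) = r • allOnes (Fin n))
    (hB₂ : ∀ i j, allOnes (Fin n) * B i j = r • allOnes (Fin n)) :
    Commute (comp _ _ _ _ ℤ B) (allOnes (Fin m × Fin n)) := by
  change comp _ _ _ _ ℤ B * comp _ _ _ _ ℤ (.of fun _ _ => allOnes (Fin n)) =
    comp _ _ _ _ ℤ (.of fun _ _ => allOnes (Fin n)) * comp _ _ _ _ ℤ B
  rw [comp_mul_comp, comp_mul_comp]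
  congr 1
  ext1 i j
  simp [Matrix.mul_apply, hB₁, hB₂]

lemma commute_gram {A : Matrix (Fin m × Fin n) (Fin m × Fin n) ℤ}
    (hJ : Commute A (blockJ m n)) (hJJ : Commute A (allOnes (Fin m × Fin n))) (x y z : ℤ) :
    Commute A (x • 1 + y • (blockJ m n - 1) + z • (allOnes (Fin m × Fin n) - blockJ m n)) :=
  (((Commute.one_right A).smul_right x).add_right
    ((hJ.sub_right (Commute.one_right A)).smul_right y)).add_right ((hJJ.sub_right hJ).smul_right z)

end ConstantBlockSums

section WeighingMatrix

variable {n : ℕ} {M : Matrix (Fin n) (Fin n) ℤ} {r : ℤ}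

lemma abs_eq_mul_self_of_trichotomy {t : ℤ} (ht : t = -1 ∨ t = 0 ∨ t = 1) : |t| = t * t := by
  rcases ht with rfl | rfl | rfl <;> rfl

lemma map_abs_mul_allOnes (h01 : ∀ i j, M i j = -1 ∨ M i j = 0 ∨ M i j = 1)
    (hM : M * Mᵀ = r • 1) : M.map abs * allOnes (Fin n) = r • allOnes (Fin n) := by
  ext a b
  have hdiag := congrFun₂ hM a a
  simp only [Matrix.mul_apply, Matrix.transpose_apply, Matrix.smul_apply, Matrix.one_apply_eq,
    smul_eq_mul, mul_one] at hdiag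
  simp [Matrix.mul_apply, allOnes, abs_eq_mul_self_of_trichotomy (h01 _ _), hdiag]

lemma allOnes_mul_map_abs (h01 : ∀ i j, M i j = -1 ∨ M i j = 0 ∨ M i j = 1)
    (hM : M * Mᵀ = r • 1) : allOnes (Fin n) * M.map abs = r • allOnes (Fin n) := by
  have hcomm : Commute M (M * Mᵀ) := by rw [hM]; exact (Commute.one_right M).smul_right r
  have hMT : Mᵀ * Mᵀᵀ = r • 1 := by
    rw [Matrix.transpose_transpose, Matrix.transpose_mul_self_eq_of_commute hcomm, hM]
  rw [← Matrix.transpose_transpose (M.map abs), ← allOnes_transpose, ← Matrix.transpose_mul,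
    ← Matrix.transpose_map, map_abs_mul_allOnes (M := Mᵀ) (fun i j => h01 j i) hMT]
  rfl

lemma allOnes_mul_map_abs_mul_transpose (h01 : ∀ i j, M i j = -1 ∨ M i j = 0 ∨ M i j = 1)
    (hM : M * Mᵀ = r • 1) :
    allOnes (Fin n) * (M.map abs * (M.map abs)ᵀ) = (r * r) • allOnes (Fin n) := by
  rw [← Matrix.mul_assoc, allOnes_mul_map_abs h01 hM, Matrix.smul_mul, ← allOnes_transpose,
    ← Matrix.transpose_mul, map_abs_mul_allOnes h01 hM, Matrix.transpose_smul, smul_smul]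

end WeighingMatrix

def IsGeneralizedHadamard {m N : ℕ} (c : Fin m → Fin m → ZMod N) : Prop :=
  ∀ i j : Fin m, i ≠ j → ∀ g : ZMod N, #{ℓ | c i ℓ - c j ℓ = g} = m / N

section NegacyclicProduct

variable {m n k lam : ℕ} {c : Fin m → Fin m → ZMod (2 * n)} {C : Matrix (Fin n) (Fin n) ℤ}

variable (c C) in
def negacyclicProduct : Matrix (Fin m × Fin n) (Fin m × Fin n) ℤ :=
  comp _ _ _ _ ℤ (.of fun i ℓ => twistedShift (-1) (c i ℓ) * C)

variable [NeZero n]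

lemma comp_twistedShift_mul_transpose {ι : Type*} [Fintype ι] {s : ℤ} (hs : s * s = 1)
    (c : ι → ι → ZMod (2 * n)) (M : Matrix (Fin n) (Fin n) ℤ)
    (hM : ∀ g, Commute (twistedShift s g) (M * Mᵀ)) :
    comp _ _ _ _ ℤ (.of fun i ℓ => twistedShift s (c i ℓ) * M) *
        (comp _ _ _ _ ℤ (.of fun i ℓ => twistedShift s (c i ℓ) * M))ᵀ =
      comp _ _ _ _ ℤ (.of fun i j => ∑ ℓ, twistedShift s (c i ℓ - c j ℓ) * (M * Mᵀ)) := by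
  rw [comp_mul_transpose_comp]
  congr 1
  ext1 i j
  simp only [Matrix.of_apply]
  refine sum_congr rfl fun ℓ _ => ?_
  have hcomm : Commute (M * Mᵀ) (twistedShift s (c j ℓ))ᵀ := by
    rw [transpose_twistedShift hs]; exact (hM _).symm
  simp only [Matrix.transpose_mul, Matrix.mul_assoc]
  rw [← Matrix.mul_assoc M, hcomm.eq, ← Matrix.mul_assoc, twistedShift_mul_transpose hs]

lemma sum_twistedShift_sub_mul {s : ℤ} (hc : IsGeneralizedHadamard c)
    (X : Matrix (Fin n) (Fin n) ℤ) (i j : Fin m) :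
    ∑ ℓ, twistedShift s (c i ℓ - c j ℓ) * X =
      if i = j then m • X else (m / (2 * n)) • ((1 + s) • allOnes (Fin n) * X) := by
  split_ifs with hij
  · simp [hij, twistedShift_zero]
  · rw [sum_comp_eq_nsmul_sum (M := Matrix (Fin n) (Fin n) ℤ) (hc i j hij)
      fun g => twistedShift s g * X, ← sum_mul, sum_twistedShift]

lemma negacyclicProduct_apply_trichotomy (h01 : ∀ i j, C i j = -1 ∨ C i j = 0 ∨ C i j = 1)
    (x y : Fin m × Fin n) :
    negacyclicProduct c C x y = -1 ∨ negacyclicProduct c C x y = 0 ∨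
      negacyclicProduct c C x y = 1 := by
  obtain ⟨b, h | h⟩ := exists_eq_finToZMod (finToZMod x.2 - c x.1 y.1)
  · rw [negacyclicProduct, comp_apply, Matrix.of_apply, twistedShift_mul_apply_of_eq h]
    exact h01 b y.2
  · rw [negacyclicProduct, comp_apply, Matrix.of_apply, twistedShift_mul_apply_of_eq_add h]
    rcases h01 b y.2 with h' | h' | h' <;> simp [h']

lemma negacyclicProduct_map_abs :
    (negacyclicProduct c C).map abs =
      comp _ _ _ _ ℤ (.of fun i ℓ => twistedShift 1 (c i ℓ) * C.map abs) := by
  rw [negacyclicProduct, ← comp_map_map]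
  congr 1
  ext1 i ℓ
  exact twistedShift_neg_one_mul_map_abs _ _

lemma negacyclicProduct_mul_transpose (hc : IsGeneralizedHadamard c)
    (hCW : C * Cᵀ = (k : ℤ) • 1) :
    negacyclicProduct c C * (negacyclicProduct c C)ᵀ = ((m : ℤ) * k) • 1 := by
  have hM (g : ZMod (2 * n)) : Commute (twistedShift (-1) g) (C * Cᵀ) := by
    rw [hCW]; exact (Commute.one_right _).smul_right _
  rw [negacyclicProduct, comp_twistedShift_mul_transpose (by norm_num) c C hM, ← comp_one]
  change _ = comp _ _ _ _ ℤ (((m : ℤ) * k) • 1)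
  congr 1
  ext1 i j
  rw [Matrix.of_apply, sum_twistedShift_sub_mul hc, hCW, Matrix.smul_apply, Matrix.one_apply]
  split_ifs <;> simp [mul_smul]

lemma negacyclicProduct_map_abs_mul_transpose (hdvd : 2 * n ∣ m)
    (hc : IsGeneralizedHadamard c) (h01 : ∀ i j, C i j = -1 ∨ C i j = 0 ∨ C i j = 1)
    (hCW : C * Cᵀ = (k : ℤ) • 1)
    (hCB : C.map abs * (C.map abs)ᵀ = ((k : ℤ) - lam) • 1 + (lam : ℤ) • allOnes (Fin n)) :
    (negacyclicProduct c C).map abs * ((negacyclicProduct c C).map abs)ᵀ =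
      ((m : ℤ) * k) • 1 + ((m : ℤ) * lam) • (blockJ m n - 1) +
        (((m / n : ℕ) : ℤ) * (k : ℤ) ^ 2) • (allOnes (Fin m × Fin n) - blockJ m n) := by
  have hM (g : ZMod (2 * n)) : Commute (twistedShift 1 g) (C.map abs * (C.map abs)ᵀ) := by
    rw [hCB]
    exact ((Commute.one_right _).smul_right _).add_right
      ((commute_twistedShift_one_allOnes g).smul_right _)
  obtain ⟨q, rfl⟩ := hdvd
  have hq : 2 * n * q / n = 2 * q := by
    rw [show 2 * n * q = n * (2 * q) by ring, Nat.mul_div_cancel_left _ (NeZero.pos n)]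
  rw [negacyclicProduct_map_abs, comp_twistedShift_mul_transpose (mul_one 1) c _ hM]
  ext ⟨i, a⟩ ⟨j, b⟩
  rw [comp_apply, Matrix.of_apply, sum_twistedShift_sub_mul hc]
  split_ifs with hij
  · subst hij
    rw [hCB]
    simp only [Matrix.add_apply, Matrix.smul_apply, Matrix.sub_apply, Matrix.one_apply, blockJ,
      allOnes, Matrix.of_apply, Prod.mk.injEq, true_and, if_true, smul_eq_mul, nsmul_eq_mul]
    split_ifs <;> push_cast <;> ring
  · rw [Matrix.smul_mul, allOnes_mul_map_abs_mul_transpose h01 hCW, hq,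
      Nat.mul_div_cancel_left q (NeZero.pos (2 * n))]
    simp only [Matrix.add_apply, Matrix.smul_apply, Matrix.sub_apply, Matrix.one_apply, blockJ,
      allOnes, Matrix.of_apply, Prod.mk.injEq, hij, false_and, if_false, smul_eq_mul,
      nsmul_eq_mul]
    push_cast
    ring

lemma negacyclicProduct_map_abs_mul_blockJ (h01 : ∀ i j, C i j = -1 ∨ C i j = 0 ∨ C i j = 1)
    (hCW : C * Cᵀ = (k : ℤ) • 1) :
    (negacyclicProduct c C).map abs * blockJ m n = (k : ℤ) • allOnes (Fin m × Fin n) := by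
  rw [negacyclicProduct_map_abs]
  exact comp_mul_blockJ fun _ _ => twistedShift_one_mul_mul_allOnes (map_abs_mul_allOnes h01 hCW) _

lemma blockJ_mul_negacyclicProduct_map_abs (h01 : ∀ i j, C i j = -1 ∨ C i j = 0 ∨ C i j = 1)
    (hCW : C * Cᵀ = (k : ℤ) • 1) :
    blockJ m n * (negacyclicProduct c C).map abs = (k : ℤ) • allOnes (Fin m × Fin n) := by
  rw [negacyclicProduct_map_abs]
  exact blockJ_mul_comp fun _ _ => allOnes_mul_twistedShift_one_mul (allOnes_mul_map_abs h01 hCW) _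

lemma commute_negacyclicProduct_map_abs_allOnes
    (h01 : ∀ i j, C i j = -1 ∨ C i j = 0 ∨ C i j = 1) (hCW : C * Cᵀ = (k : ℤ) • 1) :
    Commute ((negacyclicProduct c C).map abs) (allOnes (Fin m × Fin n)) := by
  rw [negacyclicProduct_map_abs]
  exact commute_comp_allOnes
    (fun _ _ => twistedShift_one_mul_mul_allOnes (map_abs_mul_allOnes h01 hCW) _)
    (fun _ _ => allOnes_mul_twistedShift_one_mul (allOnes_mul_map_abs h01 hCW) _)

end NegacyclicProduct

theorem stmt5_general (m n k lam : ℕ) (hn : 0 < n)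
    (hdvd : 2 * n ∣ m)
    -- a BGW(m, m, m) over the cyclic group ℤ/2nℤ
    (c : Fin m → Fin m → ZMod (2 * n))
    (hc : ∀ i j : Fin m, i ≠ j → ∀ g : ZMod (2 * n),
      (Finset.univ.filter fun ℓ => c i ℓ - c j ℓ = g).card = m / (2 * n))
    -- a BGW(n, k, λ) over {1, -1}
    (C : Matrix (Fin n) (Fin n) ℤ)
    (hC01 : ∀ i j, C i j = -1 ∨ C i j = 0 ∨ C i j = 1)
    (hCW : C * Cᵀ = (k : ℤ) • 1)
    (hCB : (C.map fun t => |t|) * (C.map fun t => |t|)ᵀ =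
      ((k : ℤ) - (lam : ℤ)) • 1 + (lam : ℤ) • allOnes (Fin n)) :
    ∃ W : Matrix (Fin m × Fin n) (Fin m × Fin n) ℤ,
      (∀ x y, W x y = -1 ∨ W x y = 0 ∨ W x y = 1) ∧
      W * Wᵀ = ((m : ℤ) * k) • 1 ∧
      (W.map fun t => |t|) * (W.map fun t => |t|)ᵀ =
        ((m : ℤ) * k) • 1 + ((m : ℤ) * lam) • (blockJ m n - 1) +
          (((m / n : ℕ) : ℤ) * (k : ℤ) ^ 2) • (allOnes (Fin m × Fin n) - blockJ m n) ∧
      (W.map fun t => |t|)ᵀ * (W.map fun t => |t|) =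
        ((m : ℤ) * k) • 1 + ((m : ℤ) * lam) • (blockJ m n - 1) +
          (((m / n : ℕ) : ℤ) * (k : ℤ) ^ 2) • (allOnes (Fin m × Fin n) - blockJ m n) ∧
      (W.map fun t => |t|) * blockJ m n = (k : ℤ) • allOnes (Fin m × Fin n) ∧
      blockJ m n * (W.map fun t => |t|) = (k : ℤ) • allOnes (Fin m × Fin n) := by
  have : NeZero n := ⟨hn.ne'⟩
  have hgram := negacyclicProduct_map_abs_mul_transpose hdvd hc hC01 hCW hCB
  have hright := negacyclicProduct_map_abs_mul_blockJ (c := c) hC01 hCW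
  have hleft := blockJ_mul_negacyclicProduct_map_abs (c := c) hC01 hCW
  have hnormal : Commute ((negacyclicProduct c C).map abs)
      ((negacyclicProduct c C).map abs * ((negacyclicProduct c C).map abs)ᵀ) := by
    rw [hgram]
    exact commute_gram (hright.trans hleft.symm)
      (commute_negacyclicProduct_map_abs_allOnes hC01 hCW) _ _ _
  exact ⟨negacyclicProduct c C, negacyclicProduct_apply_trichotomy hC01,
    negacyclicProduct_mul_transpose hc hCW, hgram,
    (Matrix.transpose_mul_self_eq_of_commute hnormal).trans hgram, hright, hleft⟩

theorem stmt5 (m n k lam : ℕ) (hm : 0 < m) (hn : 0 < n) (hk : 0 < k) (hlam : 0 < lam)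
    (hdvd : 2 * n ∣ m)
    -- a BGW(m, m, m) over the cyclic group ℤ/2nℤ
    (c : Fin m → Fin m → ZMod (2 * n))
    (hc : ∀ i j : Fin m, i ≠ j → ∀ g : ZMod (2 * n),
      (Finset.univ.filter fun ℓ => c i ℓ - c j ℓ = g).card = m / (2 * n))
    -- a BGW(n, k, λ) over {1, -1}
    (C : Matrix (Fin n) (Fin n) ℤ)
    (hC01 : ∀ i j, C i j = -1 ∨ C i j = 0 ∨ C i j = 1)
    (hCW : C * Cᵀ = (k : ℤ) • 1)
    (hCB : (C.map fun t => |t|) * (C.map fun t => |t|)ᵀ =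
      ((k : ℤ) - (lam : ℤ)) • 1 + (lam : ℤ) • allOnes (Fin n)) :
    ∃ W : Matrix (Fin m × Fin n) (Fin m × Fin n) ℤ,
      (∀ x y, W x y = -1 ∨ W x y = 0 ∨ W x y = 1) ∧
      W * Wᵀ = ((m : ℤ) * k) • 1 ∧
      (W.map fun t => |t|) * (W.map fun t => |t|)ᵀ =
        ((m : ℤ) * k) • 1 + ((m : ℤ) * lam) • (blockJ m n - 1) +
          (((m / n : ℕ) : ℤ) * (k : ℤ) ^ 2) • (allOnes (Fin m × Fin n) - blockJ m n) ∧
      (W.map fun t => |t|)ᵀ * (W.map fun t => |t|) =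
        ((m : ℤ) * k) • 1 + ((m : ℤ) * lam) • (blockJ m n - 1) +
          (((m / n : ℕ) : ℤ) * (k : ℤ) ^ 2) • (allOnes (Fin m × Fin n) - blockJ m n) ∧
      (W.map fun t => |t|) * blockJ m n = (k : ℤ) • allOnes (Fin m × Fin n) ∧
      blockJ m n * (W.map fun t => |t|) = (k : ℤ) • allOnes (Fin m × Fin n) :=
  stmt5_general m n k lam hn hdvd c hc C hC01 hCW hCB
end

section
/- Let p be a prime and let A be the adjacency matrix of a strongly regular graph SRG(v,k,λ,μ) with 0 < k and k < v − 1. Suppose W is a v×v complex matrix such that W_{ij}^p = 1 whenever A_{ij} = 1, W_{ij} = 0 whenever A_{ij} = 0, and W·W* = k·I, where W* is the conjugate transpose. Then p divides λ and p divides μ, and the signing is srg-balanced: for all distinct indices i, j and every complex number ζ with ζ^p = 1, the number of indices ℓ with W_{iℓ} ≠ 0, W_{jℓ} ≠ 0, and W_{iℓ}·conj(W_{jℓ}) = ζ equals λ/p if A_{ij} = 1 and equals μ/p if A_{ij} = 0. -/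
open Matrix

open Polynomial in
lemma key_roots (p : ℕ) (hp : p.Prime) (ω : ℂ) (hω : IsPrimitiveRoot ω p)
    (n : ℕ → ℕ) (h : ∑ t ∈ Finset.range p, (n t : ℂ) * ω ^ t = 0) :
    ∀ s t, s < p → t < p → n s = n t := by
  haveI : Fact p.Prime := ⟨hp⟩
  set g : ℚ[X] := ∑ t ∈ Finset.range p, C (n t : ℚ) * X ^ t with hg
  have haev : aeval ω g = 0 := by
    rw [hg]
    simp only [map_sum, _root_.map_mul, aeval_C, aeval_X_pow]
    simpa using h
  have hmin : minpoly ℚ ω = cyclotomic p ℚ :=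
    (Polynomial.cyclotomic_eq_minpoly_rat hω hp.pos).symm
  have hdvd : cyclotomic p ℚ ∣ g := hmin ▸ minpoly.dvd ℚ ω haev
  obtain ⟨q, hq⟩ := hdvd
  have hdegg : g.natDegree ≤ p - 1 := by
    apply Polynomial.natDegree_sum_le_of_forall_le
    intro t ht
    have h1 : ((C ((n t : ℚ)) : ℚ[X]) * X ^ t).natDegree ≤ t := by
      calc _ ≤ (X ^ t : ℚ[X]).natDegree := Polynomial.natDegree_C_mul_le _ _
        _ ≤ t := by simp
    exact h1.trans (Nat.le_sub_one_of_lt (Finset.mem_range.mp ht))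
  have hcyc : cyclotomic p ℚ = ∑ i ∈ Finset.range p, X ^ i := cyclotomic_prime ℚ p
  have hdegcyc : (cyclotomic p ℚ).natDegree = p - 1 := by
    rw [Polynomial.natDegree_cyclotomic, Nat.totient_prime hp]
  -- coefficient of g at s < p is n s
  have hcoeff : ∀ s, s < p → g.coeff s = (n s : ℚ) := by
    intro s hs
    rw [hg, Polynomial.finset_sum_coeff]
    rw [Finset.sum_eq_single s]
    · simp
    · intro b hb hbs
      simp [Polynomial.coeff_C_mul, Polynomial.coeff_X_pow, (Ne.symm hbs)]
    · intro hsn; exact absurd (Finset.mem_range.mpr hs) hsn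
  rcases eq_or_ne q 0 with rfl | hq0
  · have : g = 0 := by simpa using hq
    intro s t hs ht
    have hns : (n s : ℚ) = 0 := by rw [← hcoeff s hs, this]; simp
    have hnt : (n t : ℚ) = 0 := by rw [← hcoeff t ht, this]; simp
    exact_mod_cast hns.trans hnt.symm
  · have hcn : cyclotomic p ℚ ≠ 0 := Polynomial.cyclotomic_ne_zero p ℚ
    have hdq : q.natDegree = 0 := by
      have := Polynomial.natDegree_mul hcn hq0
      rw [← hq, hdegcyc] at this
      omega
    obtain ⟨a, rfl⟩ := Polynomial.natDegree_eq_zero.mp hdq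
    have hco : ∀ s, s < p → g.coeff s = a := by
      intro s hs
      rw [hq, hcyc, Polynomial.coeff_mul_C, Polynomial.finset_sum_coeff]
      rw [Finset.sum_eq_single s]
      · simp
      · intro b hb hbs; simp [Polynomial.coeff_X_pow, Ne.symm hbs]
      · intro hsn; exact absurd (Finset.mem_range.mpr hs) hsn
    intro s t hs ht
    have : (n s : ℚ) = (n t : ℚ) := by
      rw [← hcoeff s hs, ← hcoeff t ht, hco s hs, hco t ht]
    exact_mod_cast this

lemma pair_count (p : ℕ) (hp : p.Prime) (v : ℕ) (k : ℤ)
    (A : Matrix (Fin v) (Fin v) ℤ)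
    (hsym : A.IsSymm) (h01 : ∀ i j, A i j = 0 ∨ A i j = 1)
    (W : Matrix (Fin v) (Fin v) ℂ)
    (hW1 : ∀ i j, A i j = 1 → (W i j) ^ p = 1)
    (hW0 : ∀ i j, A i j = 0 → W i j = 0)
    (hWW : W * Wᴴ = (k : ℂ) • 1)
    (i j : Fin v) (hij : i ≠ j) :
    ∃ m : ℕ, (A * A) i j = (p : ℤ) * m ∧ ∀ ζ : ℂ, ζ ^ p = 1 →
      ({ℓ : Fin v | W i ℓ ≠ 0 ∧ W j ℓ ≠ 0 ∧
          W i ℓ * (starRingEnd ℂ) (W j ℓ) = ζ}.ncard = m) := by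
  haveI : NeZero p := ⟨hp.ne_zero⟩
  have hnz : ∀ a b, W a b ≠ 0 ↔ A a b = 1 := by
    intro a b
    constructor
    · intro h
      rcases h01 a b with h0 | h1
      · exact absurd (hW0 a b h0) h
      · exact h1
    · intro h1 h0
      have := hW1 a b h1
      rw [h0, zero_pow hp.ne_zero] at this
      exact zero_ne_one this
  set u : Fin v → ℂ := fun ℓ => W i ℓ * (starRingEnd ℂ) (W j ℓ) with hu
  set N : Finset (Fin v) := Finset.univ.filter (fun ℓ => A i ℓ = 1 ∧ A j ℓ = 1) with hN
  -- (A*A) i j = N.card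
  have hAA : (A * A) i j = (N.card : ℤ) := by
    rw [Matrix.mul_apply, hN, Finset.card_filter, Nat.cast_sum]
    apply Finset.sum_congr rfl
    intro ℓ _
    have hsymm : A j ℓ = A ℓ j := hsym.apply ℓ j
    rcases h01 i ℓ with h0 | h0 <;> rcases h01 j ℓ with h1 | h1 <;>
      simp [h0, h1, ← hsymm]
  -- sum of u over everything is 0
  have hsum0 : ∑ ℓ, u ℓ = 0 := by
    have := congrFun (congrFun hWW i) j
    rw [Matrix.mul_apply] at this
    simp only [Matrix.smul_apply, Matrix.one_apply_ne hij, smul_zero] at this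
    rw [← this]
    apply Finset.sum_congr rfl
    intro ℓ _
    rw [hu, Matrix.conjTranspose_apply]
    rfl
  have hsumN : ∑ ℓ ∈ N, u ℓ = 0 := by
    rw [← hsum0]
    apply Finset.sum_subset (Finset.subset_univ N)
    intro ℓ _ hℓ
    rw [hN, Finset.mem_filter] at hℓ
    push_neg at hℓ
    rcases h01 i ℓ with h0 | h1
    · simp [hu, hW0 i ℓ h0]
    · have h0' : A j ℓ = 0 := by
        rcases h01 j ℓ with h0' | h1'
        · exact h0'
        · exact absurd (hℓ (Finset.mem_univ ℓ) h1) (by simp [h1'])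
      simp [hu, hW0 j ℓ h0']
  -- u is a p-th root of unity on N
  have hup : ∀ ℓ ∈ N, (u ℓ) ^ p = 1 := by
    intro ℓ hℓ
    rw [hN, Finset.mem_filter] at hℓ
    rw [hu]
    simp only [mul_pow, ← map_pow]
    rw [hW1 i ℓ hℓ.2.1, hW1 j ℓ hℓ.2.2]
    simp
  set ω : ℂ := Complex.exp (2 * Real.pi * Complex.I / p) with hω'
  have hω : IsPrimitiveRoot ω p := Complex.isPrimitiveRoot_exp p hp.ne_zero
  classical
  set e : Fin v → ℕ := fun ℓ =>
    if h : (u ℓ) ^ p = 1 then (hω.eq_pow_of_pow_eq_one h).choose else 0 with he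
  have heP : ∀ ℓ ∈ N, e ℓ < p ∧ ω ^ (e ℓ) = u ℓ := by
    intro ℓ hℓ
    have h := hup ℓ hℓ
    rw [he]
    simp only [dif_pos h]
    exact (hω.eq_pow_of_pow_eq_one h).choose_spec
  have hmaps : ∀ ℓ ∈ N, e ℓ ∈ Finset.range p := fun ℓ hℓ =>
    Finset.mem_range.mpr (heP ℓ hℓ).1
  set n : ℕ → ℕ := fun t => (N.filter (fun ℓ => e ℓ = t)).card with hn
  have hkey : ∑ t ∈ Finset.range p, (n t : ℂ) * ω ^ t = 0 := by
    rw [← hsumN, ← Finset.sum_fiberwise_of_maps_to hmaps u]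
    refine Finset.sum_congr rfl fun t _ => ?_
    have hval : ∀ ℓ ∈ N.filter (fun ℓ => e ℓ = t), u ℓ = ω ^ t := by
      intro ℓ hℓ
      rw [Finset.mem_filter] at hℓ
      rw [← hℓ.2]
      exact ((heP ℓ hℓ.1).2).symm
    rw [Finset.sum_congr rfl hval, Finset.sum_const]
    simp only [hn, nsmul_eq_mul]
  have hall := key_roots p hp ω hω n hkey
  refine ⟨n 0, ?_, ?_⟩
  · -- card N = p * n 0
    have hcard : N.card = ∑ t ∈ Finset.range p, n t := by
      have := Finset.sum_fiberwise_of_maps_to hmaps (fun _ => (1 : ℕ))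
      simp only [Finset.sum_const, smul_eq_mul, mul_one] at this
      exact this.symm
    have hconst : ∑ t ∈ Finset.range p, n t = p * n 0 := by
      rw [Finset.sum_congr rfl (fun t ht => hall t 0 (Finset.mem_range.mp ht) hp.pos)]
      simp [mul_comm]
    rw [hAA, hcard, hconst]
    push_cast
    ring
  · intro ζ hζ
    obtain ⟨s, hs, hωs⟩ := hω.eq_pow_of_pow_eq_one hζ
    have hSet : {ℓ : Fin v | W i ℓ ≠ 0 ∧ W j ℓ ≠ 0 ∧
        W i ℓ * (starRingEnd ℂ) (W j ℓ) = ζ} = ↑(N.filter (fun ℓ => e ℓ = s)) := by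
      ext ℓ
      simp only [Set.mem_setOf_eq, Finset.coe_filter, Set.mem_setOf_eq, Finset.mem_filter,
        hN, Finset.mem_univ, true_and, hnz]
      constructor
      · rintro ⟨h1, h2, h3⟩
        refine ⟨⟨h1, h2⟩, ?_⟩
        have hℓN : ℓ ∈ N := by rw [hN]; simp [h1, h2]
        have := (heP ℓ hℓN).2
        rw [hu] at this
        simp only at this
        have heq : ω ^ (e ℓ) = ω ^ s := by rw [this, h3, hωs]
        exact hω.pow_inj (heP ℓ hℓN).1 hs heq
      · rintro ⟨⟨h1, h2⟩, h3⟩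
        have hℓN : ℓ ∈ N := by rw [hN]; simp [h1, h2]
        refine ⟨h1, h2, ?_⟩
        have := (heP ℓ hℓN).2
        rw [← hωs, ← h3, this]
    rw [hSet, Set.ncard_coe_finset]
    exact hall s 0 hs hp.pos

theorem stmt10 (p : ℕ) (hp : p.Prime) (v : ℕ) (k l mu : ℤ)
    (A : Matrix (Fin v) (Fin v) ℤ) (hA : IsSRGAdj A k l mu)
    (hk0 : 0 < k) (hkv : k < (v : ℤ) - 1)
    (W : Matrix (Fin v) (Fin v) ℂ)
    (hW1 : ∀ i j, A i j = 1 → (W i j) ^ p = 1)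
    (hW0 : ∀ i j, A i j = 0 → W i j = 0)
    (hWW : W * Wᴴ = (k : ℂ) • 1) :
    (p : ℤ) ∣ l ∧ (p : ℤ) ∣ mu ∧
    ∀ i j : Fin v, i ≠ j → ∀ ζ : ℂ, ζ ^ p = 1 →
      ({ℓ : Fin v | W i ℓ ≠ 0 ∧ W j ℓ ≠ 0 ∧
          W i ℓ * (starRingEnd ℂ) (W j ℓ) = ζ}.ncard : ℤ) =
        if A i j = 1 then l / p else mu / p := by
  obtain ⟨hsym, hdiag, h01, heq⟩ := hA
  have hpz : ((p : ℤ)) ≠ 0 := by exact_mod_cast hp.ne_zero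
  -- off-diagonal entries of A*A
  have hAAij : ∀ i j : Fin v, i ≠ j →
      (A * A) i j = l * A i j + mu * (1 - A i j) := by
    intro i j hij
    have := congrFun (congrFun heq i) j
    simp only [Matrix.add_apply, Matrix.smul_apply, Matrix.sub_apply,
      Matrix.one_apply_ne hij, smul_eq_mul, allOnes, Matrix.of_apply] at this
    rw [this]; ring
  -- row sums are k
  have hrow : ∀ i : Fin v, ∑ ℓ, A i ℓ = k := by
    intro i
    have := congrFun (congrFun heq i) i
    rw [Matrix.mul_apply] at this
    simp only [Matrix.add_apply, Matrix.smul_apply, Matrix.sub_apply,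
      Matrix.one_apply_eq, smul_eq_mul, allOnes, Matrix.of_apply, hdiag i] at this
    have h2 : (k * 1 + l * 0 + mu * (1 - 1 - 0) : ℤ) = k := by ring
    rw [h2] at this
    rw [← this]
    apply Finset.sum_congr rfl
    intro ℓ _
    have hsymm : A i ℓ = A ℓ i := hsym.apply ℓ i
    rcases h01 i ℓ with h0 | h0 <;> simp [h0, ← hsymm]
  have hv : 3 ≤ v := by
    have : (3 : ℤ) ≤ (v : ℤ) := by omega
    exact_mod_cast this
  set i0 : Fin v := ⟨0, by omega⟩ with hi0
  -- edge existence
  have hedge : ∃ j : Fin v, i0 ≠ j ∧ A i0 j = 1 := by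
    have hne : ∑ ℓ, A i0 ℓ ≠ 0 := by rw [hrow]; omega
    obtain ⟨ℓ, _, hℓ⟩ := Finset.exists_ne_zero_of_sum_ne_zero hne
    refine ⟨ℓ, ?_, ?_⟩
    · rintro rfl; exact hℓ (hdiag _)
    · rcases h01 i0 ℓ with h0 | h1
      · exact absurd h0 hℓ
      · exact h1
  -- non-edge existence
  have hnonedge : ∃ j : Fin v, i0 ≠ j ∧ A i0 j = 0 := by
    by_contra hcon
    push_neg at hcon
    have hall : ∀ ℓ : Fin v, A i0 ℓ = 1 - (if ℓ = i0 then 1 else 0) := by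
      intro ℓ
      rcases eq_or_ne ℓ i0 with rfl | hne
      · simp [hdiag]
      · rcases h01 i0 ℓ with h0 | h1
        · exact absurd h0 (hcon ℓ (Ne.symm hne))
        · simp [h1, hne]
    have : ∑ ℓ, A i0 ℓ = (v : ℤ) - 1 := by
      rw [Finset.sum_congr rfl (fun ℓ _ => hall ℓ), Finset.sum_sub_distrib]
      simp [Finset.card_univ]
    rw [hrow] at this
    omega
  -- helper to identify p*m with l or mu
  have hedgeval : ∀ i j : Fin v, i ≠ j → A i j = 1 → (A * A) i j = l := by
    intro i j hij h1; rw [hAAij i j hij, h1]; ring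
  have hnonval : ∀ i j : Fin v, i ≠ j → A i j = 0 → (A * A) i j = mu := by
    intro i j hij h0; rw [hAAij i j hij, h0]; ring
  refine ⟨?_, ?_, ?_⟩
  · obtain ⟨j, hij, h1⟩ := hedge
    obtain ⟨m, hm, _⟩ := pair_count p hp v k A hsym h01 W hW1 hW0 hWW i0 j hij
    exact ⟨m, by rw [← hedgeval i0 j hij h1, hm]⟩
  · obtain ⟨j, hij, h0⟩ := hnonedge
    obtain ⟨m, hm, _⟩ := pair_count p hp v k A hsym h01 W hW1 hW0 hWW i0 j hij
    exact ⟨m, by rw [← hnonval i0 j hij h0, hm]⟩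
  · intro i j hij ζ hζ
    obtain ⟨m, hm, hcount⟩ := pair_count p hp v k A hsym h01 W hW1 hW0 hWW i j hij
    rw [hcount ζ hζ]
    rcases h01 i j with h0 | h1
    · rw [if_neg (by rw [h0]; exact zero_ne_one)]
      have : mu = (p : ℤ) * m := by rw [← hnonval i j hij h0, hm]
      rw [this, Int.mul_ediv_cancel_left _ hpz]
    · rw [if_pos h1]
      have : l = (p : ℤ) * m := by rw [← hedgeval i j hij h1, hm]
      rw [this, Int.mul_ediv_cancel_left _ hpz]
end

section
/- There exists a 28×28 integer matrix W with entries in {−1,0,1} such that W·Wᵀ = 12·I and |W| is the adjacency matrix of a strongly regular graph SRG(28,12,6,4); that is, a strongly regular graph with parameters (28,12,6,4) admits an srg-balanced signing over {1,−1}. -/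
open Matrix

/-! The support of `W18` is the triangular graph `T(8)`: its vertices are the 2-subsets of
`{0, …, 7}` in lexicographic order, adjacent when they meet, and it is strongly regular with
parameters `(28, 12, 6, 4)`. Given the explicit signing, each required property is a finite
integer computation, left to the kernel. -/

def W18 : Matrix (Fin 28) (Fin 28) ℤ :=
  !![0, -1, 1, 1, -1, -1, -1, 1, 1, -1, -1, 1, -1, 0, 0, 0, 0, 0, 0, 0, 0, 0, 0, 0, 0, 0, 0, 0;
  1, 0, 1, 1, 1, 1, 1, 1, 0, 0, 0, 0, 0, 1, -1, -1, 1, -1, 0, 0, 0, 0, 0, 0, 0, 0, 0, 0;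
  -1, -1, 0, 1, -1, 1, 1, 0, -1, 0, 0, 0, 0, -1, 0, 0, 0, 0, -1, -1, -1, -1, 0, 0, 0, 0, 0, 0;
  -1, -1, -1, 0, 1, 1, -1, 0, 0, -1, 0, 0, 0, 0, -1, 0, 0, 0, 1, 0, 0, 0, -1, 1, 1, 0, 0, 0;
  1, -1, 1, -1, 0, 1, -1, 0, 0, 0, 1, 0, 0, 0, 0, 1, 0, 0, 0, -1, 0, 0, 1, 0, 0, 1, 1, 0;
  1, -1, -1, -1, -1, 0, 1, 0, 0, 0, 0, 1, 0, 0, 0, 0, 1, 0, 0, 0, 1, 0, 0, 1, 0, -1, 0, -1;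
  1, -1, -1, 1, 1, -1, 0, 0, 0, 0, 0, 0, 1, 0, 0, 0, 0, 1, 0, 0, 0, -1, 0, 0, -1, 0, 1, 1;
  -1, -1, 0, 0, 0, 0, 0, 0, 1, 1, -1, -1, 1, 1, 1, 1, 1, -1, 0, 0, 0, 0, 0, 0, 0, 0, 0, 0;
  1, 0, -1, 0, 0, 0, 0, 1, 0, 1, -1, -1, -1, -1, 0, 0, 0, 0, 1, -1, -1, 1, 0, 0, 0, 0, 0, 0;
  -1, 0, 0, -1, 0, 0, 0, 1, -1, 0, -1, 1, 1, 0, -1, 0, 0, 0, 1, 0, 0, 0, 1, -1, -1, 0, 0, 0;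
  -1, 0, 0, 0, 1, 0, 0, -1, 1, 1, 0, 1, -1, 0, 0, -1, 0, 0, 0, -1, 0, 0, 1, 0, 0, -1, 1, 0;
  -1, 0, 0, 0, 0, -1, 0, 1, -1, 1, 1, 0, -1, 0, 0, 0, 1, 0, 0, 0, 1, 0, 0, 1, 0, 1, 0, 1;
  -1, 0, 0, 0, 0, 0, 1, 1, 1, -1, 1, -1, 0, 0, 0, 0, 0, 1, 0, 0, 0, 1, 0, 0, -1, 0, 1, -1;
  0, -1, 1, 0, 0, 0, 0, -1, -1, 0, 0, 0, 0, 0, 1, -1, 1, 1, 1, 1, -1, 1, 0, 0, 0, 0, 0, 0;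
  0, -1, 0, -1, 0, 0, 0, 1, 0, 1, 0, 0, 0, 1, 0, -1, -1, 1, -1, 0, 0, 0, -1, -1, 1, 0, 0, 0;
  0, 1, 0, 0, -1, 0, 0, -1, 0, 0, -1, 0, 0, 1, -1, 0, 1, 1, 0, -1, 0, 0, -1, 0, 0, 1, 1, 0;
  0, -1, 0, 0, 0, -1, 0, -1, 0, 0, 0, -1, 0, -1, -1, -1, 0, -1, 0, 0, 1, 0, 0, -1, 0, 1, 0, -1;
  0, -1, 0, 0, 0, 0, 1, -1, 0, 0, 0, 0, -1, 1, -1, 1, -1, 0, 0, 0, 0, 1, 0, 0, -1, 0, -1, 1;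
  0, 0, 1, -1, 0, 0, 0, 0, 1, 1, 0, 0, 0, -1, -1, 0, 0, 0, 0, 1, -1, -1, -1, 1, -1, 0, 0, 0;
  0, 0, 1, 0, 1, 0, 0, 0, -1, 0, -1, 0, 0, -1, 0, 1, 0, 0, -1, 0, 1, 1, -1, 0, 0, -1, 1, 0;
  0, 0, 1, 0, 0, -1, 0, 0, -1, 0, 0, -1, 0, 1, 0, 0, -1, 0, 1, -1, 0, -1, 0, 1, 0, -1, 0, -1;
  0, 0, 1, 0, 0, 0, 1, 0, 1, 0, 0, 0, 1, -1, 0, 0, 0, 1, 1, -1, 1, 0, 0, 0, 1, 0, -1, 1;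
  0, 0, 0, 1, -1, 0, 0, 0, 0, 1, 1, 0, 0, 0, -1, 1, 0, 0, 1, 1, 0, 0, 0, -1, 1, -1, 1, 0;
  0, 0, 0, 1, 0, 1, 0, 0, 0, 1, 0, 1, 0, 0, 1, 0, -1, 0, 1, 0, 1, 0, -1, 0, -1, 1, 0, -1;
  0, 0, 0, -1, 0, 0, 1, 0, 0, -1, 0, 0, -1, 0, 1, 0, 0, -1, 1, 0, 0, -1, -1, -1, 0, 0, 1, 1;
  0, 0, 0, 0, 1, -1, 0, 0, 0, 0, 1, 1, 0, 0, 0, 1, 1, 0, 0, -1, -1, 0, -1, -1, 0, 0, -1, -1;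
  0, 0, 0, 0, -1, 0, -1, 0, 0, 0, 1, 0, 1, 0, 0, -1, 0, -1, 0, -1, 0, 1, -1, 0, -1, -1, 0, 1;
  0, 0, 0, 0, 0, -1, 1, 0, 0, 0, 0, 1, 1, 0, 0, 0, -1, -1, 0, 0, -1, 1, 0, 1, 1, 1, 1, 0]

-- Instance search does not unfold `Matrix` to find `DecidableEq ℤ` under the binders of `∀ i j`.
instance decidableEqMatrixEntry {m n α : Type*} [DecidableEq α] (A : Matrix m n α) (i : m) (j : n)
    (a : α) : Decidable (A i j = a) :=
  decEq _ _

theorem W18_entries : ∀ i j, W18 i j = -1 ∨ W18 i j = 0 ∨ W18 i j = 1 := by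
  decide +kernel

theorem W18_mul_transpose : W18 * W18ᵀ = (12 : ℤ) • 1 := by
  decide +kernel

theorem isSRGAdj_abs_W18 : IsSRGAdj (W18.map fun t => |t|) 12 6 4 := by
  unfold IsSRGAdj
  decide +kernel

theorem stmt18 :
    ∃ W : Matrix (Fin 28) (Fin 28) ℤ,
      (∀ i j, W i j = -1 ∨ W i j = 0 ∨ W i j = 1) ∧
      W * Wᵀ = (12 : ℤ) • 1 ∧
      IsSRGAdj (W.map fun t => |t|) 12 6 4 :=
  ⟨W18, W18_entries, W18_mul_transpose, isSRGAdj_abs_W18⟩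
end
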